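/- Let N ≥ 3, 1 ≤ k ≤ N−1, and let the 3×3 matrix M have rows (1, α10, α20), (α01, α11, α21), (α02, α12, α22) where αij = g_ij(r,k)/g_i0(r,k) with g_i0(r,k), g_i1(r,k), g_i2(r,k) the sums Σ_{m≥0} 1/((3m+i)N+k)^{1+r}, Σ_{m≥0} 1/((3m+i)N+k)^r, Σ_{m≥0} 1/((3m+i)N+k)^{r−1} respectively (i = 0,1,2), r ≥ 3, with the convention that the i=0 family starts at frequency k (i.e., includes m=0 term 1/k^s). Then α01 < α11 < α21 strictly (the ratios g_i1/g_i0 are strictly increasing in i). -/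

import Mathlib

/-!
Write `ω_m = 3mN + p` with `p = iN + k` for the frequencies of the `i`-th family. The ratio
`g_i1 / g_i0 = Σ ω_m⁻ʳ / Σ ω_m⁻⁽ʳ⁺¹⁾` is an average of the `ω_m` with weights `ω_m⁻⁽ʳ⁺¹⁾`, so it
exceeds `p`; the excess `Σ 3mN ω_m⁻⁽ʳ⁺¹⁾` is smaller than `N p⁻⁽ʳ⁺¹⁾` as soon as `p ≤ 2N` and
`r ≥ 3` (compare termwise with `(2/9) N p⁻⁽ʳ⁺¹⁾ / m²` and use `ζ(2) < 8/3`), and `p⁻⁽ʳ⁺¹⁾` is the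
`m = 0` term of the denominator, so the ratio is also below `p + N`. Hence the ratios of
the families `i = 0, 1, 2` lie in the consecutive intervals `(k, N + k)`, `(N + k, 2N + k)`,
`(2N + k, ∞)`.
-/

/-- `g i s = Σ_{m≥0} 1/((3m+i)N+k)^s`, the sums appearing in the second-order
Hermite spline construction (the `i = 0` family starts at frequency `k`). -/
noncomputable def gSum (N k i s : ℕ) : ℝ := ∑' m : ℕ, 1 / (((3 * m + i) * N + k : ℕ) : ℝ) ^ s

-- At `m = 0` both sides vanish, the right one through `1 / 0 = 0`.
lemma three_mul_mul_pow_le_inv_sq (m : ℕ) {x : ℝ} (hx0 : 0 ≤ x) (hx : x * (3 * m + 2) ≤ 2)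
    {n : ℕ} (hn : 4 ≤ n) : 3 * m * x ^ n ≤ 2 / 9 * (1 / (m : ℝ) ^ 2) := by
  rcases Nat.eq_zero_or_pos m with rfl | hm
  · simp
  have hm1 : (1 : ℝ) ≤ m := by exact_mod_cast hm
  have hx1 : x ≤ 1 := by nlinarith
  have hx4 : (x * (3 * m + 2)) ^ 4 ≤ 2 ^ 4 := pow_le_pow_left₀ (by positivity) hx 4
  have hbinom : 216 * (m : ℝ) ^ 3 ≤ (3 * m + 2) ^ 4 := by
    nlinarith [pow_pos (by positivity : (0 : ℝ) < m) 4]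
  calc 3 * m * x ^ n ≤ 3 * m * x ^ 4 :=
        mul_le_mul_of_nonneg_left (pow_le_pow_of_le_one hx0 hx1 hn) (by positivity)
    _ ≤ 2 / 9 * (1 / (m : ℝ) ^ 2) := by
      rw [mul_pow] at hx4
      rw [div_mul_div_comm, le_div_iff₀ (by positivity)]
      nlinarith [pow_nonneg hx0 4]

section Progression

variable {N p : ℝ}

lemma summable_one_div_progression_pow (hN : 0 < N) (hp : 0 < p) {s : ℕ} (hs : 1 < s) :
    Summable fun m : ℕ => 1 / (3 * m * N + p) ^ s := by
  refine (summable_nat_add_iff 1).1 <| Summable.of_nonneg_of_le (fun m => by positivity)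
    (fun m => ?_) <| ((summable_nat_add_iff 1).2 (Real.summable_one_div_nat_pow.2 hs)).mul_left
      ((1 / (3 * N)) ^ s)
  rw [← one_div_pow, ← one_div_pow, ← mul_pow, div_mul_div_comm, one_mul]
  gcongr
  push_cast
  nlinarith

lemma summable_progression_excess (hN : 0 < N) (hp : 0 < p) {r : ℕ} (hr : 1 < r) :
    Summable fun m : ℕ => 3 * m * N / (3 * m * N + p) ^ (r + 1) := by
  refine (summable_one_div_progression_pow hN hp hr).of_nonneg_of_le (fun m => by positivity)
    fun m => ?_
  rw [div_le_div_iff₀ (by positivity) (by positivity), pow_succ]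
  nlinarith [mul_pos (pow_pos (by positivity : 0 < 3 * m * N + p) r) hp]

lemma tsum_one_div_progression_pow_eq (hN : 0 < N) (hp : 0 < p) {r : ℕ} (hr : 1 < r) :
    ∑' m : ℕ, 1 / (3 * m * N + p) ^ r =
      p * ∑' m : ℕ, 1 / (3 * m * N + p) ^ (r + 1) +
        ∑' m : ℕ, 3 * m * N / (3 * m * N + p) ^ (r + 1) := by
  rw [← Summable.tsum_mul_left _ (summable_one_div_progression_pow hN hp (by omega)),
    ← Summable.tsum_add ((summable_one_div_progression_pow hN hp (by omega)).mul_left _)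
      (summable_progression_excess hN hp hr)]
  congr 1 with m
  have : 3 * m * N + p ≠ 0 := by positivity
  field_simp
  ring

lemma tsum_progression_excess_pos (hN : 0 < N) (hp : 0 < p) {r : ℕ} (hr : 1 < r) :
    0 < ∑' m : ℕ, 3 * m * N / (3 * m * N + p) ^ (r + 1) :=
  (summable_progression_excess hN hp hr).tsum_pos (fun m => by positivity) 1 (by positivity)

lemma tsum_progression_excess_lt (hN : 0 < N) (hp : 0 < p) (hpN : p ≤ 2 * N) {r : ℕ}
    (hr : 3 ≤ r) :
    ∑' m : ℕ, 3 * m * N / (3 * m * N + p) ^ (r + 1) < N / p ^ (r + 1) := by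
  have hterm : ∀ m : ℕ, 3 * m * N / (3 * m * N + p) ^ (r + 1) ≤
      N / p ^ (r + 1) * (2 / 9 * (1 / (m : ℝ) ^ 2)) := fun m => by
    have hω : 0 < 3 * m * N + p := by positivity
    have hx : p / (3 * m * N + p) * (3 * m + 2) ≤ 2 := by
      rw [div_mul_eq_mul_div, div_le_iff₀ hω]; nlinarith [(Nat.cast_nonneg m : (0:ℝ) ≤ m)]
    calc 3 * m * N / (3 * m * N + p) ^ (r + 1)
        = N / p ^ (r + 1) * (3 * m * (p / (3 * m * N + p)) ^ (r + 1)) := by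
          rw [div_pow]; field_simp
      _ ≤ N / p ^ (r + 1) * (2 / 9 * (1 / (m : ℝ) ^ 2)) :=
          mul_le_mul_of_nonneg_left
            (three_mul_mul_pow_le_inv_sq m (by positivity) hx (by omega)) (by positivity)
  have hzeta := (hasSum_zeta_two.mul_left (2 / 9)).mul_left (N / p ^ (r + 1))
  calc ∑' m : ℕ, 3 * m * N / (3 * m * N + p) ^ (r + 1)
      ≤ N / p ^ (r + 1) * (2 / 9 * (Real.pi ^ 2 / 6)) :=
        hzeta.tsum_eq ▸ (summable_progression_excess hN hp (by omega)).tsum_le_tsum hterm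
          hzeta.summable
    _ < N / p ^ (r + 1) := by
      have : Real.pi ^ 2 < 16 := by nlinarith [Real.pi_lt_four, Real.pi_pos]
      have : 0 < N / p ^ (r + 1) := by positivity
      nlinarith

lemma lt_tsum_div_tsum_progression (hN : 0 < N) (hp : 0 < p) {r : ℕ} (hr : 1 < r) :
    p < (∑' m : ℕ, 1 / (3 * m * N + p) ^ r) / ∑' m : ℕ, 1 / (3 * m * N + p) ^ (r + 1) := by
  have hpos := (summable_one_div_progression_pow hN hp (by omega : 1 < r + 1)).tsum_pos
    (fun m => by positivity) 0 (by positivity)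
  rw [lt_div_iff₀ hpos, tsum_one_div_progression_pow_eq hN hp hr]
  linarith [tsum_progression_excess_pos hN hp hr]

lemma tsum_div_tsum_progression_lt (hN : 0 < N) (hp : 0 < p) (hpN : p ≤ 2 * N) {r : ℕ}
    (hr : 3 ≤ r) :
    (∑' m : ℕ, 1 / (3 * m * N + p) ^ r) / ∑' m : ℕ, 1 / (3 * m * N + p) ^ (r + 1) <
      p + N := by
  have hsum := summable_one_div_progression_pow hN hp (by omega : 1 < r + 1)
  have hpos := hsum.tsum_pos (fun m => by positivity) 0 (by positivity)
  have hfirst : 1 / p ^ (r + 1) ≤ ∑' m : ℕ, 1 / (3 * m * N + p) ^ (r + 1) := by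
    simpa using hsum.le_tsum 0 fun m _ => by positivity
  rw [div_lt_iff₀ hpos, tsum_one_div_progression_pow_eq hN hp (by omega)]
  have := tsum_progression_excess_lt hN hp hpN hr
  rw [← mul_one_div] at this
  nlinarith

end Progression

lemma gSum_eq_tsum (N k i s : ℕ) :
    gSum N k i s = ∑' m : ℕ, 1 / (3 * m * (N : ℝ) + (i * N + k)) ^ s := by
  unfold gSum
  congr 1 with m
  push_cast
  ring

theorem stmt_18_general (N k : ℕ) (hk : 1 ≤ k) (hk' : k ≤ N - 1)
    (r : ℕ) (hr : 3 ≤ r) :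
    gSum N k 0 r / gSum N k 0 (r + 1) < gSum N k 1 r / gSum N k 1 (r + 1) ∧
    gSum N k 1 r / gSum N k 1 (r + 1) < gSum N k 2 r / gSum N k 2 (r + 1) := by
  have hN : (0 : ℝ) < N := by exact_mod_cast (by omega : 0 < N)
  have hkN : (k : ℝ) ≤ N := by exact_mod_cast (by omega : k ≤ N)
  have hp (i : ℕ) : (0 : ℝ) < i * N + k := by positivity
  have lower1 := lt_tsum_div_tsum_progression hN (hp 1) (by omega : 1 < r)
  have lower2 := lt_tsum_div_tsum_progression hN (hp 2) (by omega : 1 < r)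
  have upper0 := tsum_div_tsum_progression_lt hN (hp 0) (by push_cast; linarith) hr
  have upper1 := tsum_div_tsum_progression_lt hN (hp 1) (by push_cast; linarith) hr
  simp only [gSum_eq_tsum]
  push_cast at lower1 lower2 upper0 upper1 ⊢
  constructor <;> linarith

theorem stmt_18 (N k : ℕ) (hN : 3 ≤ N) (hk : 1 ≤ k) (hk' : k ≤ N - 1)
    (r : ℕ) (hr : 3 ≤ r) :
    gSum N k 0 r / gSum N k 0 (r + 1) < gSum N k 1 r / gSum N k 1 (r + 1) ∧
    gSum N k 1 r / gSum N k 1 (r + 1) < gSum N k 2 r / gSum N k 2 (r + 1) :=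
  stmt_18_general N k hk hk' r hr
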